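/- arXiv:math/0608160 — 4 statements merged into one kernel-verified Lean document; each statement's English description precedes it below -/
import Mathlib

section
/- For an odd integer n ≥ 3, the Abel sum lim_{t→1⁻} Σ_j (-1)^j b_j t^j equals (n+1)/(2n-2), where b_j are the coefficients of the series t^(n-1)*(1/(1-t^2) + t^(n-1)/(1-t^(n-1))). -/
/-!
Put `m = n - 1`, which is even. Evaluating the power series at `-t` absorbs the sign `(-1) ^ j`,
so for `|t| < 1` the alternating series sums to `t ^ m / (1 - t ^ 2) + t ^ (2m) / (1 - t ^ m)`.
Since `(1 - t) / (1 - t ^ k) = 1 / (1 + t + ⋯ + t ^ (k - 1)) → 1 / k` as `t → 1`, the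
regularized sum tends to `1 / 2 + 1 / m = (n + 1) / (2n - 2)`.
-/

open PowerSeries Filter Topology

theorem PowerSeries.inv_one_sub_X_pow {K : Type*} [Field K] {m : ℕ} (hm : 0 < m) :
    (1 - (X : K⟦X⟧) ^ m)⁻¹ = mk fun k => if m ∣ k then 1 else 0 := by
  have hc : constantCoeff (1 - (X : K⟦X⟧) ^ m) ≠ 0 := by simp [zero_pow hm.ne']
  rw [eq_comm, PowerSeries.eq_inv_iff_mul_eq_one hc]
  ext k
  rw [mul_sub, mul_one, map_sub, coeff_mul_X_pow', coeff_mk, coeff_one]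
  rcases Nat.eq_zero_or_pos k with rfl | hk
  · simp [hm.ne']
  by_cases hmk : m ≤ k
  · simp [hmk, hk.ne', Nat.dvd_sub_iff_left hmk dvd_rfl]
  · have : ¬m ∣ k := fun h => hmk (Nat.le_of_dvd hk h)
    simp [hmk, hk.ne', this]

theorem PowerSeries.coeff_X_pow_mul_inv_one_sub_X_pow {K : Type*} [Field K] {m : ℕ}
    (hm : 0 < m) (a k : ℕ) :
    coeff k ((X : K⟦X⟧) ^ a * (1 - X ^ m)⁻¹) = if a ≤ k ∧ m ∣ k - a then 1 else 0 := by
  rw [mul_comm, coeff_mul_X_pow', inv_one_sub_X_pow hm, coeff_mk]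
  split_ifs <;> tauto

theorem PowerSeries.hasSum_coeff_X_pow_mul_inv_one_sub_X_pow {𝕜 : Type*} [NormedField 𝕜]
    [CompleteSpace 𝕜] {m : ℕ} (hm : 0 < m) (a : ℕ) {s : 𝕜} (hs : ‖s‖ < 1) :
    HasSum (fun k => ((coeff k ((X : ℚ⟦X⟧) ^ a * (1 - X ^ m)⁻¹) : ℚ) : 𝕜) * s ^ k)
      (s ^ a / (1 - s ^ m)) := by
  have hinj : Function.Injective fun i => a + m * i := fun i j h => by
    simpa [hm.ne'] using h
  have hsm : ‖s ^ m‖ < 1 := by simpa using pow_lt_one₀ (norm_nonneg s) hs hm.ne'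
  refine (hinj.hasSum_iff fun k hk => ?_).mp ?_
  · rw [coeff_X_pow_mul_inv_one_sub_X_pow hm, if_neg, Rat.cast_zero, zero_mul]
    rintro ⟨hak, i, hi⟩
    exact hk ⟨i, show a + m * i = k by omega⟩
  · rw [div_eq_mul_inv]
    refine ((hasSum_geometric_of_norm_lt_one hsm).mul_left (s ^ a)).congr_fun fun i => ?_
    rw [Function.comp_apply, coeff_X_pow_mul_inv_one_sub_X_pow hm, if_pos (by simp),
      Rat.cast_one, one_mul, pow_add, pow_mul]

theorem tendsto_one_sub_mul_pow_div_one_sub_pow {m : ℕ} (hm : 0 < m) (a : ℕ) :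
    Tendsto (fun t : ℝ => (1 - t) * (t ^ a / (1 - t ^ m))) (𝓝[<] 1) (𝓝 (1 / m)) := by
  have hcont : ContinuousAt (fun t : ℝ => t ^ a / ∑ i ∈ Finset.range m, t ^ i) 1 :=
    (continuous_pow a).continuousAt.div (by fun_prop) (by simp [hm.ne'])
  have hval : (1 : ℝ) ^ a / ∑ i ∈ Finset.range m, (1 : ℝ) ^ i = 1 / m := by simp
  refine (hval ▸ hcont.tendsto).mono_left nhdsWithin_le_nhds |>.congr' ?_
  filter_upwards [self_mem_nhdsWithin] with t (ht : t < 1)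
  rw [← mul_neg_geom_sum, mul_div_assoc', mul_div_mul_left _ _ (sub_ne_zero.mpr ht.ne')]

/-- The Abel sum (with regularizing factor `(1-t)`, as the partial alternating
sums grow linearly) of `∑ (-1)^j b_j` equals `(n+1)/(2n-2)` for odd `n ≥ 3`,
where `b_j` are the coefficients of
`t^(n-1) * (1/(1-t^2) + t^(n-1)/(1-t^(n-1)))`. -/
theorem stmt_4 (n : ℕ) (hn : 3 ≤ n) (hno : Odd n) (b : ℕ → ℚ)
    (hb : ∀ k : ℕ, b k = PowerSeries.coeff k
      ((X : ℚ⟦X⟧) ^ (n - 1) *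
        ((1 - (X : ℚ⟦X⟧) ^ 2)⁻¹ +
          (X : ℚ⟦X⟧) ^ (n - 1) * (1 - (X : ℚ⟦X⟧) ^ (n - 1))⁻¹))) :
    Tendsto (fun t : ℝ => (1 - t) * ∑' j : ℕ, (-1) ^ j * (b j : ℝ) * t ^ j)
      (nhdsWithin 1 (Set.Iio 1)) (nhds (((n : ℝ) + 1) / (2 * n - 2))) := by
  set m := n - 1 with hm_def
  have hm : 0 < m := by omega
  have hm_even : Even m := by
    obtain ⟨k, rfl⟩ := hno
    exact ⟨k, by omega⟩
  have hseries : (X : ℚ⟦X⟧) ^ m * ((1 - X ^ 2)⁻¹ + X ^ m * (1 - X ^ m)⁻¹)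
      = X ^ m * (1 - X ^ 2)⁻¹ + X ^ (m + m) * (1 - X ^ m)⁻¹ := by ring
  have hsum (t : ℝ) (ht : |t| < 1) : HasSum (fun j => (-1) ^ j * (b j : ℝ) * t ^ j)
      (t ^ m / (1 - t ^ 2) + t ^ (m + m) / (1 - t ^ m)) := by
    have hs : ‖-t‖ < 1 := by simpa using ht
    have h := (hasSum_coeff_X_pow_mul_inv_one_sub_X_pow two_pos m hs).add
      (hasSum_coeff_X_pow_mul_inv_one_sub_X_pow hm (m + m) hs)
    rw [hm_even.neg_pow, even_two.neg_pow, (hm_even.add hm_even).neg_pow] at h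
    refine h.congr_fun fun j => ?_
    rw [hb, hseries, map_add, Rat.cast_add, neg_pow t j]
    ring
  have hlim := (tendsto_one_sub_mul_pow_div_one_sub_pow two_pos m).add
    (tendsto_one_sub_mul_pow_div_one_sub_pow hm (m + m))
  have hval : 1 / ((2 : ℕ) : ℝ) + 1 / (m : ℝ) = (n + 1) / (2 * n - 2) := by
    have hn1 : (n : ℝ) - 1 ≠ 0 := by
      rw [sub_ne_zero]; exact_mod_cast (by omega : n ≠ 1)
    rw [hm_def, Nat.cast_sub (by omega), Nat.cast_one, Nat.cast_ofNat]
    field_simp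
    ring
  refine hval ▸ hlim.congr' ?_
  filter_upwards [Ioo_mem_nhdsLT (by norm_num : (-1 : ℝ) < 1)] with t ht
  rw [(hsum t (abs_lt.mpr ht)).tsum_eq, mul_add]
end

section
/- Let I : [0, 1/2] → ℕ be a step function with jump points 0 < t_1 < ... < t_l < 1/2 (all t_j irrational), constant on each open interval between consecutive jump points, with values I_1 = n-1 on [0, t_1), I_j strictly decreasing in j down to I_l = 1 on (t_{l-1}, t_l), and I_{l+1} = 2 on (t_l, 1/2]. Extend I to [0,1] by I(t) = I(1-t). Define ind(m) = Σ_{z : z^m = 1} I(arg(z)/(2π)), i.e. ind(m) = Σ_{j=0}^{m-1} I(j/m) with the convention I(j/m) = I(1 - j/m) for j/m > 1/2. Then the sequence ind(m) is monotone non-decreasing in m. -/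
/-!
On `[0, 1/2]` away from its jump points the step function is a combination of indicators,
`I x = I_{l+1} + ∑_{j=1}^{l} (I_j - I_{j+1}) [x < t_j]`, and since `t_j` is irrational exactly
`2 ⌊m t_j⌋ + 1` of the points `min (k/m) (1 - k/m)`, `k < m`, lie below `t_j`. Hence
`ind m = 2 m - (2 ⌊m t_l⌋ + 1) + ∑_{j<l} (I_j - I_{j+1}) (2 ⌊m t_j⌋ + 1)`: the sum is
non-decreasing in `m` because its coefficients are non-negative, and `⌊m t_l⌋` grows by at
most one per step because `t_l < 1`.
-/

open Finset

lemma natCast_lt_iff_le_floor {y : ℝ} (hy : Irrational y) (hy0 : 0 ≤ y) {k : ℕ} :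
    (k : ℝ) < y ↔ k ≤ ⌊y⌋₊ := by
  rw [Nat.le_floor_iff hy0, lt_iff_le_and_ne]
  exact and_iff_left (hy.ne_nat k).symm

lemma card_filter_min_div_lt {t : ℝ} (ht : Irrational t) (ht0 : 0 < t) (ht2 : t < 1 / 2)
    {m : ℕ} (hm : m ≠ 0) :
    #((range m).filter fun k : ℕ ↦ min ((k : ℝ) / m) (1 - k / m) < t) = 2 * ⌊m * t⌋₊ + 1 := by
  set f := ⌊m * t⌋₊
  have hm' : (0 : ℝ) < m := by positivity
  have hlt : ∀ k : ℕ, (k : ℝ) < m * t ↔ k ≤ f :=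
    fun k ↦ natCast_lt_iff_le_floor (ht.natCast_mul hm) (by positivity)
  have h2f : 2 * f < m := by
    have : (f : ℝ) ≤ m * t := Nat.floor_le (by positivity)
    exact_mod_cast (show 2 * (f : ℝ) < m by nlinarith)
  have key : ∀ k < m, min ((k : ℝ) / m) (1 - k / m) < t ↔ k ≤ f ∨ m - f ≤ k := by
    intro k hk
    have h1 : (k : ℝ) / m < t ↔ k ≤ f := by rw [div_lt_iff₀ hm', mul_comm, hlt]
    have h2 : 1 - (k : ℝ) / m < t ↔ m - k ≤ f := by
      rw [← hlt, Nat.cast_sub hk.le, one_sub_div hm'.ne', div_lt_iff₀ hm', mul_comm t]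
    rw [min_lt_iff, h1, h2]
    omega
  have hset : ((range m).filter fun k : ℕ ↦ min ((k : ℝ) / m) (1 - k / m) < t)
      = range (f + 1) ∪ Ico (m - f) m := by
    ext k
    simp only [mem_filter, mem_range, mem_union, mem_Ico]
    by_cases hk : k < m
    · rw [key k hk]; omega
    · simp only [hk, false_and, and_false, or_false, false_iff, not_lt]
      omega
  rw [hset, card_union_of_disjoint (disjoint_left.2 fun k hk hk' ↦ by simp at hk hk'; omega),
    card_range, Nat.card_Ico]
  omega

lemma sum_Ico_ite_sub_eq_sub {f : ℕ → ℤ} {p : ℕ → Prop} [DecidablePred p] {a b i : ℕ}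
    (hai : a ≤ i) (hib : i ≤ b) (hp : ∀ j ∈ Ico a b, p j ↔ i ≤ j) :
    ∑ j ∈ Ico a b, (if p j then f j - f (j + 1) else 0) = f i - f b := by
  have hfilter : ({j ∈ Ico a b | p j} : Finset ℕ) = Ico i b := by
    ext j
    simp only [mem_filter, mem_Ico]
    constructor
    · rintro ⟨hj, hpj⟩; exact ⟨(hp j (mem_Ico.2 hj)).1 hpj, hj.2⟩
    · rintro hj; exact ⟨⟨by omega, hj.2⟩, (hp j (mem_Ico.2 ⟨by omega, hj.2⟩)).2 hj.1⟩
  rw [← sum_filter, hfilter, ← neg_sub, ← sum_Ico_sub f hib, ← sum_neg_distrib]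
  simp only [neg_sub]

lemma natFloor_add_one_mul_le {x t : ℝ} (hx : 0 ≤ x) (ht0 : 0 ≤ t) (ht1 : t ≤ 1) :
    ⌊(x + 1) * t⌋₊ ≤ ⌊x * t⌋₊ + 1 :=
  calc ⌊(x + 1) * t⌋₊ ≤ ⌊x * t + 1⌋₊ := Nat.floor_le_floor (by nlinarith)
    _ = ⌊x * t⌋₊ + 1 := Nat.floor_add_one (by positivity)

lemma min_div_one_sub_div_mem_Icc {k m : ℕ} (hk : k ≤ m) :
    min ((k : ℝ) / m) (1 - k / m) ∈ Set.Icc 0 (1 / 2) := by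
  have h1 : (k : ℝ) / m ≤ 1 := div_le_one_of_le₀ (by exact_mod_cast hk) (by positivity)
  refine ⟨le_min (by positivity) (by linarith), ?_⟩
  rcases le_total ((k : ℝ) / m) (1 / 2) with h | h
  · exact (min_le_left _ _).trans h
  · exact (min_le_right _ _).trans (by linarith)

section StepFunction

variable {l : ℕ} {t : ℕ → ℝ} {Iv : ℕ → ℕ} {I : ℝ → ℕ}

lemma jump_mem_Ioo (ht0 : t 0 = 0) (htend : t (l + 1) = 1 / 2)
    (hmono : StrictMonoOn t (Set.Iic (l + 1))) {j : ℕ} (hj1 : 1 ≤ j) (hjl : j ≤ l) :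
    t j ∈ Set.Ioo 0 (1 / 2) := by
  rw [← ht0, ← htend]
  exact ⟨hmono (by simp) (by simp; omega) (by omega), hmono (by simp; omega) (by simp) (by omega)⟩

lemma exists_index_of_step (hmono : StrictMonoOn t (Set.Iic (l + 1)))
    (hstep : ∀ j, 1 ≤ j → j ≤ l + 1 → ∀ x : ℝ, t (j - 1) < x → x < t j → I x = Iv j)
    (hI0 : I (t 0) = Iv 1) (hIend : I (t (l + 1)) = Iv (l + 1))
    {x : ℝ} (hx0 : t 0 ≤ x) (hx1 : x ≤ t (l + 1)) (hxt : ∀ j, 1 ≤ j → j ≤ l → x ≠ t j) :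
    ∃ i, 1 ≤ i ∧ i ≤ l + 1 ∧ I x = Iv i ∧ ∀ j ≤ l, (x < t j ↔ i ≤ j) := by
  classical
  rcases hx1.eq_or_lt with rfl | hx1
  · refine ⟨l + 1, by omega, le_rfl, hIend, fun j hj ↦ iff_of_false ?_ (by omega)⟩
    exact not_lt.2 (hmono (by simp; omega) (by simp) (by omega)).le
  have hex : ∃ i, x < t i := ⟨_, hx1⟩
  have hi : x < t (Nat.find hex) := Nat.find_spec hex
  have hil : Nat.find hex ≤ l + 1 := Nat.find_min' hex hx1
  have hi0 : Nat.find hex ≠ 0 := fun h ↦ by rw [h] at hi; linarith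
  have hprev : t (Nat.find hex - 1) ≤ x := not_lt.1 (Nat.find_min hex (by omega))
  refine ⟨Nat.find hex, by omega, hil, ?_, fun j hj ↦ ⟨Nat.find_min' hex, fun h ↦
    hi.trans_le (hmono.monotoneOn (Set.mem_Iic.2 hil) (Set.mem_Iic.2 (by omega)) h)⟩⟩
  rcases hprev.eq_or_lt with h | h
  · obtain h1 : Nat.find hex = 1 := by
      by_contra h1
      exact hxt (Nat.find hex - 1) (by omega) (by omega) h.symm
    rw [h1] at h
    rw [h1, ← h]
    exact hI0
  · exact hstep _ (by omega) hil x h hi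

lemma step_eq_add_sum_ite (hmono : StrictMonoOn t (Set.Iic (l + 1)))
    (hstep : ∀ j, 1 ≤ j → j ≤ l + 1 → ∀ x : ℝ, t (j - 1) < x → x < t j → I x = Iv j)
    (hI0 : I (t 0) = Iv 1) (hIend : I (t (l + 1)) = Iv (l + 1))
    {x : ℝ} (hx0 : t 0 ≤ x) (hx1 : x ≤ t (l + 1)) (hxt : ∀ j, 1 ≤ j → j ≤ l → x ≠ t j) :
    (I x : ℤ) = Iv (l + 1) + ∑ j ∈ Ico 1 (l + 1),
      (if x < t j then (Iv j : ℤ) - Iv (j + 1) else 0) := by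
  obtain ⟨i, hi1, hil, hIx, hiff⟩ := exists_index_of_step hmono hstep hI0 hIend hx0 hx1 hxt
  rw [hIx, sum_Ico_ite_sub_eq_sub (f := fun j ↦ (Iv j : ℤ)) hi1 hil
    fun j hj ↦ hiff j (by simp at hj; omega)]
  ring

lemma sum_step_min_div_eq (ht0 : t 0 = 0) (htend : t (l + 1) = 1 / 2)
    (hmono : StrictMonoOn t (Set.Iic (l + 1)))
    (htirr : ∀ j, 1 ≤ j → j ≤ l → Irrational (t j))
    (hstep : ∀ j, 1 ≤ j → j ≤ l + 1 → ∀ x : ℝ, t (j - 1) < x → x < t j → I x = Iv j)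
    (hI0 : I 0 = Iv 1) (hIhalf : I (1 / 2) = Iv (l + 1)) {m : ℕ} (hm : m ≠ 0) :
    ∑ k ∈ range m, (I (min ((k : ℝ) / m) (1 - k / m)) : ℤ) =
      m * Iv (l + 1) + ∑ j ∈ Ico 1 (l + 1), ((Iv j : ℤ) - Iv (j + 1)) * (2 * ⌊m * t j⌋₊ + 1) := by
  have hrepr : ∀ k ∈ range m, (I (min ((k : ℝ) / m) (1 - k / m)) : ℤ) = Iv (l + 1) +
      ∑ j ∈ Ico 1 (l + 1),
        (if min ((k : ℝ) / m) (1 - k / m) < t j then (Iv j : ℤ) - Iv (j + 1) else 0) := by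
    intro k hk
    have hmem := min_div_one_sub_div_mem_Icc (mem_range.1 hk).le
    have hrat : min ((k : ℝ) / m) (1 - k / m) = ((min ((k : ℚ) / m) (1 - k / m) : ℚ) : ℝ) := by
      push_cast; rfl
    refine step_eq_add_sum_ite hmono hstep (ht0 ▸ hI0) (htend ▸ hIhalf) (ht0 ▸ hmem.1)
      (htend ▸ hmem.2) fun j hj1 hjl ↦ ?_
    rw [hrat]
    exact ((htirr j hj1 hjl).ne_rat _).symm
  rw [sum_congr rfl hrepr, sum_add_distrib, sum_const, card_range, nsmul_eq_mul, sum_comm]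
  congr 1
  refine sum_congr rfl fun j hj ↦ ?_
  obtain ⟨hj1, hjl⟩ : 1 ≤ j ∧ j ≤ l := by simp at hj; omega
  obtain ⟨htj0, htj2⟩ := jump_mem_Ioo ht0 htend hmono hj1 hjl
  rw [← sum_filter, sum_const, card_filter_min_div_lt (htirr j hj1 hjl) htj0 htj2 hm,
    nsmul_eq_mul]
  push_cast
  ring

end StepFunction

theorem stmt_6_general (l : ℕ) (hl1 : 1 ≤ l)
    (t : ℕ → ℝ) (Iv : ℕ → ℕ) (I : ℝ → ℕ)
    (ht0 : t 0 = 0) (htend : t (l + 1) = 1 / 2)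
    (htmono : ∀ j, j ≤ l → t j < t (j + 1))
    (htirr : ∀ j, 1 ≤ j → j ≤ l → Irrational (t j))
    (hIvl : Iv l = 1) (hIvend : Iv (l + 1) = 2)
    (hIvdec : ∀ j, 1 ≤ j → j < l → Iv (j + 1) < Iv j)
    (hstep : ∀ j, 1 ≤ j → j ≤ l + 1 → ∀ x : ℝ, t (j - 1) < x → x < t j → I x = Iv j)
    (hI0 : I 0 = Iv 1) (hIhalf : I (1 / 2) = Iv (l + 1)) :
    ∀ m : ℕ, 1 ≤ m →
      (∑ j ∈ Finset.range m, I (min ((j : ℝ) / m) (1 - (j : ℝ) / m))) ≤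
        ∑ j ∈ Finset.range (m + 1), I (min ((j : ℝ) / (m + 1)) (1 - (j : ℝ) / (m + 1))) := by
  intro m hm
  have hmono : StrictMonoOn t (Set.Iic (l + 1)) :=
    strictMonoOn_Iic_of_lt_succ fun i hi ↦ htmono i (by omega)
  have hsum := sum_step_min_div_eq ht0 htend hmono htirr hstep hI0 hIhalf (m := m) (by omega)
  have hsum' := sum_step_min_div_eq ht0 htend hmono htirr hstep hI0 hIhalf (m := m + 1) (by omega)
  push_cast at hsum'
  zify
  rw [hsum, hsum', sum_Ico_succ_top hl1, sum_Ico_succ_top hl1, hIvl, hIvend]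
  have hcoeff : ∀ j ∈ Ico 1 l,
      ((Iv j : ℤ) - Iv (j + 1)) * (2 * ⌊(m : ℝ) * t j⌋₊ + 1) ≤
        ((Iv j : ℤ) - Iv (j + 1)) * (2 * ⌊((m : ℝ) + 1) * t j⌋₊ + 1) := by
    intro j hj
    obtain ⟨hj1, hjl⟩ : 1 ≤ j ∧ j < l := by simpa using hj
    have hdec : (Iv (j + 1) : ℤ) ≤ Iv j := by exact_mod_cast (hIvdec j hj1 hjl).le
    have htj := (jump_mem_Ioo ht0 htend hmono hj1 hjl.le).1
    gcongr
    linarith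
  obtain ⟨htl0, htl2⟩ := jump_mem_Ioo ht0 htend hmono hl1 le_rfl
  have hfloor : ⌊((m : ℝ) + 1) * t l⌋₊ ≤ ⌊(m : ℝ) * t l⌋₊ + 1 :=
    natFloor_add_one_mul_le (by positivity) htl0.le (by linarith)
  have := sum_le_sum hcoeff
  push_cast
  omega

/-- For a step function `I` on `[0,1/2]` with irrational jump points
`0 < t_1 < … < t_l < 1/2`, values `I_1 = n-1 > I_2 > … > I_l = 1` on the
successive intervals and `I_{l+1} = 2` on `(t_l, 1/2]`, extended symmetrically
to `[0,1]`, the sequence `ind(m) = ∑_{j=0}^{m-1} Ĩ(j/m)` with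
`Ĩ(u) = I(min(u, 1-u))` is monotone non-decreasing in `m ≥ 1`. -/
theorem stmt_6 (n l : ℕ) (hn : 2 ≤ n) (hl1 : 1 ≤ l) (hln : l ≤ n - 1)
    (t : ℕ → ℝ) (Iv : ℕ → ℕ) (I : ℝ → ℕ)
    (ht0 : t 0 = 0) (htend : t (l + 1) = 1 / 2)
    (htmono : ∀ j, j ≤ l → t j < t (j + 1))
    (htirr : ∀ j, 1 ≤ j → j ≤ l → Irrational (t j))
    (hIv1 : Iv 1 = n - 1) (hIvl : Iv l = 1) (hIvend : Iv (l + 1) = 2)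
    (hIvdec : ∀ j, 1 ≤ j → j < l → Iv (j + 1) < Iv j)
    (hstep : ∀ j, 1 ≤ j → j ≤ l + 1 → ∀ x : ℝ, t (j - 1) < x → x < t j → I x = Iv j)
    (hI0 : I 0 = Iv 1) (hIhalf : I (1 / 2) = Iv (l + 1)) :
    ∀ m : ℕ, 1 ≤ m →
      (∑ j ∈ Finset.range m, I (min ((j : ℝ) / m) (1 - (j : ℝ) / m))) ≤
        ∑ j ∈ Finset.range (m + 1), I (min ((j : ℝ) / (m + 1)) (1 - (j : ℝ) / (m + 1))) :=
  stmt_6_general l hl1 t Iv I ht0 htend htmono htirr hIvl hIvend hIvdec hstep hI0 hIhalf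
end

section
/- With the notation of the step function setting: for every integer m ≥ 1, ind(m+1) - ind(m) = A_m + B_m, where A_m = 2 if m is odd, A_m = 2·Ĩ(m/(2m+2)) - 2 if m is even, and B_m = 2·Σ_{1 ≤ j < m/2} ( Ĩ(j/(m+1)) - Ĩ(j/m) ). -/
/-!
Folding the sum by the symmetry `Ĩ(j/n) = Ĩ((n-j)/n)` gives
`ind(n) = Ĩ(0) + 2·∑_{1 ≤ j < n/2} Ĩ(j/n) + [n even]·Ĩ(1/2)`. Subtracting this for `m + 1` and `m`,
`Ĩ(0)` cancels, `Ĩ(1/2) = 2` comes from whichever of `m`, `m + 1` is even, and when `m` is even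
the folded sum for `m + 1` has one extra term, `j = m/2`.
-/

open Finset

theorem Finset.sum_range_eq_of_symm {M : Type*} [AddCommMonoid M] (f : ℕ → M) {n : ℕ}
    (hn : n ≠ 0) (hf : ∀ j ≤ n, f (n - j) = f j) :
    ∑ j ∈ range n, f j =
      f 0 + 2 • ∑ j ∈ Ico 1 ((n + 1) / 2), f j + if Even n then f (n / 2) else 0 := by
  have hupper : ∑ j ∈ Ico ((n + 1) / 2) n, f j = ∑ j ∈ Ico 1 (n / 2 + 1), f j := by
    calc ∑ j ∈ Ico ((n + 1) / 2) n, f j = ∑ j ∈ Ico 1 (n / 2 + 1), f (n - j) := by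
          rw [sum_Ico_reflect f 1 (by omega)]; congr 2; omega
      _ = _ := sum_congr rfl fun j hj => hf j (by simp only [mem_Ico] at hj; omega)
  have hmiddle : ∑ j ∈ Ico 1 (n / 2 + 1), f j =
      ∑ j ∈ Ico 1 ((n + 1) / 2), f j + if Even n then f (n / 2) else 0 := by
    split_ifs with heven
    · rw [sum_Ico_succ_top (by grind)]
      congr 2; grind
    · rw [add_zero]; congr 1; grind
  rw [range_eq_Ico, sum_eq_sum_Ico_succ_bot (by omega),
    ← sum_Ico_consecutive f (by omega : 1 ≤ (n + 1) / 2) (by omega : (n + 1) / 2 ≤ n),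
    hupper, hmiddle, two_nsmul]
  abel

lemma sum_range_div_eq_of_symm (It : ℝ → ℕ) (hsym : ∀ t ∈ Set.Icc (0 : ℝ) 1, It t = It (1 - t))
    {n : ℕ} (hn : n ≠ 0) :
    ∑ j ∈ range n, (It (j / n) : ℤ) =
      It 0 + 2 * ∑ j ∈ Ico 1 ((n + 1) / 2), (It (j / n) : ℤ) +
        if Even n then (It (1 / 2) : ℤ) else 0 := by
  rw [sum_range_eq_of_symm (fun j : ℕ => (It (j / n) : ℤ)) hn, nsmul_eq_mul]
  · split_ifs with heven
    · obtain ⟨k, rfl⟩ := heven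
      have hk : (k : ℝ) ≠ 0 := by exact_mod_cast (by omega : k ≠ 0)
      rw [← two_mul, Nat.mul_div_cancel_left k two_pos]
      simp [div_mul_cancel_right₀ hk]
    · simp
  · intro j hj
    have hj' : (j : ℝ) / n ∈ Set.Icc (0 : ℝ) 1 :=
      ⟨by positivity, div_le_one_of_le₀ (by exact_mod_cast hj) (Nat.cast_nonneg n)⟩
    simp only [hsym _ hj', Nat.cast_sub hj, sub_div,
      div_self (Nat.cast_ne_zero.mpr hn : (n : ℝ) ≠ 0)]

/-- Decomposition `ind(m+1) - ind(m) = A_m + B_m` for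
`ind(m) = ∑_{j=0}^{m-1} Ĩ(j/m)`, where `Ĩ(t) = Ĩ(1-t)`, `Ĩ(1/2) = 2`,
`A_m = 2` for odd `m`, `A_m = 2·Ĩ(m/(2m+2)) - 2` for even `m`, and
`B_m = 2·∑_{1 ≤ j < m/2} (Ĩ(j/(m+1)) - Ĩ(j/m))`.  (Here `It` plays the
role of `Ĩ`.) -/
theorem stmt_7 (It : ℝ → ℕ) (hsym : ∀ t ∈ Set.Icc (0 : ℝ) 1, It t = It (1 - t))
    (hhalf : It (1 / 2) = 2) :
    ∀ m : ℕ, 1 ≤ m →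
      ((∑ j ∈ Finset.range (m + 1), (It ((j : ℝ) / (m + 1)) : ℤ)) -
          ∑ j ∈ Finset.range m, (It ((j : ℝ) / m) : ℤ)) =
        (if m % 2 = 1 then 2 else 2 * (It ((m : ℝ) / (2 * m + 2)) : ℤ) - 2) +
          2 * ∑ j ∈ Finset.Ico 1 ((m + 1) / 2),
            ((It ((j : ℝ) / (m + 1)) : ℤ) - (It ((j : ℝ) / m) : ℤ)) := by
  intro m hm
  have hsucc := sum_range_div_eq_of_symm It hsym (by omega : m + 1 ≠ 0)
  push_cast at hsucc
  rw [hsucc, sum_range_div_eq_of_symm It hsym (by omega), hhalf, sum_sub_distrib]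
  rcases Nat.even_or_odd m with heven | hodd
  · have hmid : (((m + 1) / 2 : ℕ) : ℝ) / (m + 1) = m / (2 * m + 2) := by
      obtain ⟨k, rfl⟩ := heven
      rw [show (k + k + 1) / 2 = k by omega]
      push_cast
      field_simp
      ring
    rw [show (m + 1 + 1) / 2 = (m + 1) / 2 + 1 by grind, sum_Ico_succ_top (by omega), hmid,
      if_neg (Nat.not_even_iff_odd.mpr heven.add_one), if_pos heven,
      if_neg (by grind : m % 2 ≠ 1)]
    push_cast
    ring
  · rw [show (m + 1 + 1) / 2 = (m + 1) / 2 by grind, if_pos hodd.add_one,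
      if_neg (Nat.not_even_iff_odd.mpr hodd), if_pos (Nat.odd_iff.mp hodd)]
    push_cast
    ring
end

section
/- Let I_1, ..., I_{l+1} be integers with I_1 = n-1 and Σ_{j=1}^{l} |I_j - I_{j+1}| ≤ n-1, where each |I_j - I_{j+1}| ≥ 1. If min{I_1,...,I_l} = 1 is attained first at index r ≤ l and I_{l+1} is even and positive, then r = l, I_{l+1} = 2, and the sequence satisfies n-1 = I_1 > I_2 > ... > I_l = 1. -/
/-!
Cutting the total variation at an index `r ≤ l` with `I r = 1`: the jumps before `r` cost at
least `|I 1 - I r| = n - 2`, and each of the `l + 1 - r` jumps from `r` on costs at least `1`.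
The budget `n - 1` forces `r = l`, a last jump `I (l + 1) - 1 ≤ 1`, hence `I (l + 1) = 2` by
parity, and equality `∑ |I j - I (j + 1)| = I 1 - I l` before `l`, so every step there goes down.
-/

open Finset

theorem sum_Ico_sub_succ {α : Type*} [AddCommGroup α] (f : ℕ → α) {a b : ℕ} (hab : a ≤ b) :
    ∑ j ∈ Ico a b, (f j - f (j + 1)) = f a - f b := by
  simpa only [sub_neg_eq_add, neg_add_eq_sub] using sum_Ico_sub (fun j => -f j) hab

section Variation

variable {α : Type*} [AddCommGroup α] [LinearOrder α] [IsOrderedAddMonoid α]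

theorem abs_sub_le_sum_Ico_abs_sub_succ (f : ℕ → α) {a b : ℕ} (hab : a ≤ b) :
    |f a - f b| ≤ ∑ j ∈ Ico a b, |f j - f (j + 1)| :=
  sum_Ico_sub_succ f hab ▸ abs_sum_le_sum_abs _ _

theorem sub_succ_nonneg_of_sum_Ico_abs_le (f : ℕ → α) {a b : ℕ} (hab : a ≤ b)
    (h : ∑ j ∈ Ico a b, |f j - f (j + 1)| ≤ f a - f b) :
    ∀ j ∈ Ico a b, 0 ≤ f j - f (j + 1) := by
  have hle : ∀ j ∈ Ico a b, f j - f (j + 1) ≤ |f j - f (j + 1)| := fun j _ => le_abs_self _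
  have heq : ∑ j ∈ Ico a b, (f j - f (j + 1)) = ∑ j ∈ Ico a b, |f j - f (j + 1)| :=
    le_antisymm (sum_le_sum hle) (sum_Ico_sub_succ f hab ▸ h)
  intro j hj
  exact abs_eq_self.mp ((sum_eq_sum_iff_of_le hle).mp heq j hj).symm

end Variation

theorem stmt_11_general (n l r : ℕ)
    (I : ℕ → ℤ) (hI1 : I 1 = (n : ℤ) - 1)
    (hjump : ∀ j, 1 ≤ j → j ≤ l → 1 ≤ |I j - I (j + 1)|)
    (hvar : ∑ j ∈ Finset.Icc 1 l, |I j - I (j + 1)| ≤ (n : ℤ) - 1)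
    (hr1 : 1 ≤ r) (hrl : r ≤ l) (hIr : I r = 1)
    (heven : Even (I (l + 1))) (hIend : 0 < I (l + 1)) :
    r = l ∧ I (l + 1) = 2 ∧ (∀ j, 1 ≤ j → j < l → I (j + 1) < I j) ∧ I l = 1 := by
  have hsplit : ∑ j ∈ Icc 1 l, |I j - I (j + 1)| =
      ∑ j ∈ Ico 1 r, |I j - I (j + 1)| + ∑ j ∈ Ico r (l + 1), |I j - I (j + 1)| := by
    rw [← Ico_add_one_right_eq_Icc, sum_Ico_consecutive _ hr1 (by omega)]
  have hdescent : (n : ℤ) - 2 ≤ ∑ j ∈ Ico 1 r, |I j - I (j + 1)| := by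
    have := abs_sub_le_sum_Ico_abs_sub_succ I hr1
    rw [hI1, hIr] at this
    linarith [le_abs_self ((n : ℤ) - 1 - 1)]
  have hsteps : ((l + 1 - r : ℕ) : ℤ) ≤ ∑ j ∈ Ico r (l + 1), |I j - I (j + 1)| := by
    simpa using card_nsmul_le_sum (Ico r (l + 1)) _ 1
      fun j hj => have := mem_Ico.mp hj; hjump j (by omega) (by omega)
  obtain rfl : r = l := by omega
  rw [Nat.Ico_succ_singleton, sum_singleton] at hsplit
  have hlast : |I r - I (r + 1)| ≤ 1 := by linarith
  have hend : I (r + 1) = 2 := by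
    obtain ⟨k, hk⟩ := heven
    rw [hIr, abs_le] at hlast
    omega
  refine ⟨rfl, hend, fun j hj1 hjr => ?_, hIr⟩
  have htight : ∑ j ∈ Ico 1 r, |I j - I (j + 1)| ≤ I 1 - I r := by
    norm_num [hIr, hend] at hsplit
    linarith
  have hmono := sub_succ_nonneg_of_sum_Ico_abs_le I hr1 htight j (mem_Ico.mpr ⟨hj1, hjr⟩)
  have := hjump j hj1 hjr.le
  rw [abs_of_nonneg hmono] at this
  linarith

theorem stmt_11 (n l r : ℕ) (hn : 2 ≤ n) (hl1 : 1 ≤ l) (hln : l ≤ n - 1)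
    (I : ℕ → ℤ) (hpos : ∀ j, 1 ≤ j → j ≤ l + 1 → 0 ≤ I j)
    (hI1 : I 1 = (n : ℤ) - 1)
    (hjump : ∀ j, 1 ≤ j → j ≤ l → 1 ≤ |I j - I (j + 1)|)
    (hvar : ∑ j ∈ Finset.Icc 1 l, |I j - I (j + 1)| ≤ (n : ℤ) - 1)
    (hmin : ∀ j, 1 ≤ j → j ≤ l → 1 ≤ I j)
    (hr1 : 1 ≤ r) (hrl : r ≤ l) (hIr : I r = 1)
    (hrfirst : ∀ j, 1 ≤ j → j < r → I j ≠ 1)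
    (heven : Even (I (l + 1))) (hIend : 0 < I (l + 1)) :
    r = l ∧ I (l + 1) = 2 ∧ (∀ j, 1 ≤ j → j < l → I (j + 1) < I j) ∧ I l = 1 :=
  stmt_11_general n l r I hI1 hjump hvar hr1 hrl hIr heven hIend
end
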